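/- If T is a Hamiltonian digraph on an odd number t ≥ 3 of vertices, each H_i has at least 2 vertices, and at least two distinct digraphs among H_1, ..., H_t contain at least one arc, then the composition Q = T[H_1, ..., H_t] has a pair of arc-disjoint strong spanning subdigraphs. -/

import Mathlib

/-- A digraph (given by its arc relation) is strong (strongly connected). -/
def IsStrong {V : Type*} (A : V → V → Prop) : Prop :=
  ∀ x y : V, Relation.ReflTransGen A x y

/-- `A` has a pair of arc-disjoint strong spanning subdigraphs (a good decomposition). -/
def GoodDecomp {V : Type*} (A : V → V → Prop) : Prop :=
  ∃ A₁ A₂ : V → V → Prop,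
    (∀ x y, A₁ x y → A x y) ∧ (∀ x y, A₂ x y → A x y) ∧
    (∀ x y, ¬ (A₁ x y ∧ A₂ x y)) ∧ IsStrong A₁ ∧ IsStrong A₂

/-- Arc relation of the composition `T[H_1, ..., H_t]`. -/
def CompArc {t : ℕ} {Vt : Fin t → Type*} (T : Fin t → Fin t → Prop)
    (H : ∀ i, Vt i → Vt i → Prop) : (Σ i, Vt i) → (Σ i, Vt i) → Prop :=
  fun a b => T a.1 b.1 ∨ ∃ h : a.1 = b.1, H b.1 (h ▸ a.2) b.2


/-- The cyclic successor on `Fin n`. -/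
def finSucc {n : ℕ} (x : Fin n) : Fin n := ⟨(x.val + 1) % n, Nat.mod_lt _ x.pos⟩

def Semicomplete {V : Type*} (A : V → V → Prop) : Prop :=
  ∀ x y : V, x ≠ y → A x y ∨ A y x

/-- `A` is 2-arc-strong: it stays strong after deleting any set of at most one arc. -/
def TwoArcStrong {V : Type*} (A : V → V → Prop) : Prop :=
  ∀ X : Set (V × V), X.Subsingleton → IsStrong (fun x y => A x y ∧ (x, y) ∉ X)

/-- Digraph isomorphism. -/
def DIso {V W : Type*} (A : V → V → Prop) (B : W → W → Prop) : Prop :=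
  ∃ e : V ≃ W, ∀ x y, A x y ↔ B (e x) (e y)

/-- Arc relation of the directed cycle on `n` vertices. -/
def CycleArc (n : ℕ) : Fin n → Fin n → Prop := fun x y => y = finSucc x

/-- `T` (on `Fin t`) has a Hamiltonian cycle. -/
def HasHamCycle {t : ℕ} (T : Fin t → Fin t → Prop) : Prop :=
  ∃ e : Equiv.Perm (Fin t), ∀ i, T (e i) (e (finSucc i))

/-- Cartesian product of digraphs. -/
def CartProd {V W : Type*} (A : V → V → Prop) (B : W → W → Prop) :
    V × W → V × W → Prop :=
  fun p q => (A p.1 q.1 ∧ p.2 = q.2) ∨ (p.1 = q.1 ∧ B p.2 q.2)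

/-- Strong product of digraphs. -/
def StrongProd {V W : Type*} (A : V → V → Prop) (B : W → W → Prop) :
    V × W → V × W → Prop :=
  fun p q => (A p.1 q.1 ∧ p.2 = q.2) ∨ (p.1 = q.1 ∧ B p.2 q.2) ∨ (A p.1 q.1 ∧ B p.2 q.2)

/-- Lexicographic product of digraphs. -/
def LexProd {V W : Type*} (A : V → V → Prop) (B : W → W → Prop) :
    V × W → V × W → Prop :=
  fun p q => A p.1 q.1 ∨ (p.1 = q.1 ∧ B p.2 q.2)

/-- `k`-th Cartesian power of a digraph. -/
def CartPow {V : Type*} (A : V → V → Prop) (k : ℕ) :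
    (Fin k → V) → (Fin k → V) → Prop :=
  fun f g => ∃ i, A (f i) (g i) ∧ ∀ j, j ≠ i → f j = g j

/-- `A` has a collection of pairwise arc-disjoint directed cycles covering all vertices. -/
def HasCycleCover {V : Type*} (A : V → V → Prop) : Prop :=
  ∃ (k : ℕ) (m : Fin k → ℕ) (c : ∀ i : Fin k, Fin (m i) → V),
    (∀ i, 2 ≤ m i) ∧ (∀ i, Function.Injective (c i)) ∧
    (∀ i x, A (c i x) (c i (finSucc x))) ∧
    (∀ i j x y, c i x = c j y → c i (finSucc x) = c j (finSucc y) → i = j) ∧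
    (∀ v : V, ∃ i x, c i x = v)

/-- The digraph `C3[K2bar, K2bar, K2bar]`. -/
def Exc1 : Fin 3 × Fin 2 → Fin 3 × Fin 2 → Prop := fun p q => q.1 = finSucc p.1

/-- The digraph `C3[P2, K2bar, K2bar]`, the single arc of `P2` being `(0,0) → (0,1)`. -/
def Exc2 : Fin 3 × Fin 2 → Fin 3 × Fin 2 → Prop :=
  fun p q => q.1 = finSucc p.1 ∨ (p.1 = 0 ∧ q.1 = 0 ∧ p.2 = 0 ∧ q.2 = 1)

/-- Block index for `C3[K2bar, K2bar, K3bar]`. -/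
def blk : (Fin 2 ⊕ Fin 2 ⊕ Fin 3) → Fin 3 :=
  Sum.elim (fun _ => 0) (Sum.elim (fun _ => 1) (fun _ => 2))

/-- The digraph `C3[K2bar, K2bar, K3bar]`. -/
def Exc3 : (Fin 2 ⊕ Fin 2 ⊕ Fin 3) → (Fin 2 ⊕ Fin 2 ⊕ Fin 3) → Prop :=
  fun p q => blk q = finSucc (blk p)

/-- `S4`: the complete digraph on 4 vertices minus the directed 4-cycle `x → x+1`. -/
def S4Arc : Fin 4 → Fin 4 → Prop := fun x y => x ≠ y ∧ y ≠ finSucc x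

/-
Number the blocks `0, …, t-1` along the Hamiltonian cycle of `T` and fix two vertices
`v (j, 0) ≠ v (j, 1)` in every block, chosen as the ends of an arc of `H_i` in two blocks
`a ≠ b`. All arcs from block `j` to block `j + 1` are present, so between the chosen vertices
one may use either the two "parallel" arcs `v (j, s) → v (j + 1, s)` or the two "crossing" arcs
`v (j, s) → v (j + 1, s + 1)`; the two subdigraphs make complementary choices at every `j`.
The second crosses exactly at `a` and `b`: its chosen vertices form two disjoint `t`-cycles, and
the arcs inside blocks `a` and `b` join them. The first crosses at the other `t - 2` blocks, an odd
number, so its chosen vertices form a single `2t`-cycle. Every other vertex of block `j` is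
entered from block `j - 1` and left towards block `j + 1`, from and to opposite sides in the two
subdigraphs.
-/

open Relation Function
open Fin.NatCast Fin.CommRing

theorem isStrong_of_reflTransGen_range {V P : Type*} {R : V → V → Prop} (v : P → V)
    (hrange : ∀ p q, ReflTransGen R (v p) (v q))
    (hout : ∀ x ∉ Set.range v, (∃ p, R (v p) x) ∧ ∃ q, R x (v q)) : IsStrong R := by
  have hto : ∀ x, ∃ q, ReflTransGen R x (v q) := fun x => by
    by_cases hx : x ∈ Set.range v
    · obtain ⟨q, rfl⟩ := hx
      exact ⟨q, .refl⟩
    · obtain ⟨q, hq⟩ := (hout x hx).2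
      exact ⟨q, .single hq⟩
  have hfrom : ∀ y, ∃ p, ReflTransGen R (v p) y := fun y => by
    by_cases hy : y ∈ Set.range v
    · obtain ⟨p, rfl⟩ := hy
      exact ⟨p, .refl⟩
    · obtain ⟨p, hp⟩ := (hout y hy).1
      exact ⟨p, .single hp⟩
  intro x y
  obtain ⟨q, hxq⟩ := hto x
  obtain ⟨p, hpy⟩ := hfrom y
  exact hxq.trans ((hrange q p).trans hpy)

theorem Equiv.Perm.SameCycle.reflTransGen {α W : Type*} [Finite α] {σ : Equiv.Perm α}
    {R : W → W → Prop} {f : α → W} (hR : ∀ x, R (f x) (f (σ x))) {x y : α}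
    (h : σ.SameCycle x y) : ReflTransGen R (f x) (f y) := by
  obtain ⟨n, rfl⟩ := h.exists_nat_pow_eq
  clear h
  induction n with
  | zero => exact .refl
  | succ n ih => exact ih.tail (by rw [pow_succ', Equiv.Perm.mul_apply]; exact hR _)

section Ladder

variable {t : ℕ} [NeZero t]

def twistShift (τ : Fin t → ZMod 2) : Equiv.Perm (Fin t × ZMod 2) where
  toFun p := (p.1 + 1, p.2 + τ p.1)
  invFun p := (p.1 - 1, p.2 - τ (p.1 - 1))
  left_inv p := by simp
  right_inv p := by simp

theorem twistShift_apply (τ : Fin t → ZMod 2) (p : Fin t × ZMod 2) :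
    twistShift τ p = (p.1 + 1, p.2 + τ p.1) := rfl

theorem twistShift_pow_apply (τ : Fin t → ZMod 2) (j : Fin t) (s : ZMod 2) (k : ℕ) :
    (twistShift τ ^ k) (j, s) = (j + k, s + ∑ i ∈ Finset.range k, τ (j + i)) := by
  induction k with
  | zero => simp
  | succ k ih =>
    rw [pow_succ', Equiv.Perm.mul_apply, ih, twistShift_apply, Finset.sum_range_succ]
    simp only [Nat.cast_succ, add_assoc]

theorem sum_range_add_eq_sum (τ : Fin t → ZMod 2) (j : Fin t) :
    ∑ i ∈ Finset.range t, τ (j + i) = ∑ i, τ i := by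
  rw [← Fin.sum_univ_eq_sum_range (fun i => τ (j + i))]
  simp only [Fin.cast_val_eq_self]
  exact Equiv.sum_comp (Equiv.addLeft j) τ

theorem sameCycle_twistShift_add_one {τ : Fin t → ZMod 2} (hτ : ∑ i, τ i = 1) (j : Fin t)
    (s : ZMod 2) : (twistShift τ).SameCycle (j, s) (j, s + 1) :=
  ⟨t, by rw [zpow_natCast, twistShift_pow_apply, sum_range_add_eq_sum, hτ, Fin.natCast_self,
    add_zero]⟩

theorem sameCycle_twistShift_single_add_single {a b : Fin t} (hab : a ≠ b) (s : ZMod 2) :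
    (twistShift (Pi.single a 1 + Pi.single b 1)).SameCycle (a, s) (b, s + 1) := by
  refine ⟨(b - a).val, ?_⟩
  rw [zpow_natCast, twistShift_pow_apply, Fin.cast_val_eq_self, add_sub_cancel,
    Finset.sum_eq_single 0]
  · simp [hab]
  · intro i hi hi0
    have hit : i < t := (Finset.mem_range.mp hi).trans (b - a).isLt
    have hia : a + (i : Fin t) ≠ a := by
      simpa [Fin.natCast_eq_zero, Nat.dvd_iff_mod_eq_zero, Nat.mod_eq_of_lt hit] using hi0
    have hib : a + (i : Fin t) ≠ b := by
      intro h
      have := congrArg Fin.val (eq_sub_of_add_eq' h)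
      rw [Fin.val_cast_of_lt hit] at this
      exact (Finset.mem_range.mp hi).ne this
    simp [hia, hib]
  · simp [sub_eq_zero, hab.symm]

theorem reflTransGen_of_twistShift {W : Type*} {τ : Fin t → ZMod 2} {R : W → W → Prop}
    {f : Fin t × ZMod 2 → W} (hR : ∀ p, R (f p) (f (twistShift τ p))) {a : Fin t}
    (h01 : ReflTransGen R (f (a, 0)) (f (a, 1))) (h10 : ReflTransGen R (f (a, 1)) (f (a, 0)))
    (p q : Fin t × ZMod 2) : ReflTransGen R (f p) (f q) := by
  have hsame : ∀ p : Fin t × ZMod 2, ∃ s, (twistShift τ).SameCycle (a, s) p := by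
    rintro ⟨j, s⟩
    refine ⟨s - ∑ i ∈ Finset.range (j - a).val, τ (a + i), (j - a).val, ?_⟩
    rw [zpow_natCast, twistShift_pow_apply, Fin.cast_val_eq_self, add_sub_cancel, sub_add_cancel]
  have hhub : ∀ s,
      ReflTransGen R (f (a, s)) (f (a, 0)) ∧ ReflTransGen R (f (a, 0)) (f (a, s)) := by
    intro s
    fin_cases s
    exacts [⟨.refl, .refl⟩, ⟨h10, h01⟩]
  obtain ⟨s, hp⟩ := hsame p
  obtain ⟨s', hq⟩ := hsame q
  exact (hp.symm.reflTransGen hR).trans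
    ((hhub s).1.trans ((hhub s').2.trans (hq.reflTransGen hR)))

end Ladder

section TwistArc

variable {t : ℕ} [NeZero t] {W : Type*}

/-- `v (j, s)`, `s : ZMod 2`, are the two chosen vertices of block `j`; `τ j = 1` makes the arcs
from block `j` cross sides, and every unchosen vertex is entered from side `c` and left towards
side `c + 1`. -/
def twistArc (blk : W → Fin t) (v : Fin t × ZMod 2 → W) (τ : Fin t → ZMod 2) (c : ZMod 2)
    (x y : W) : Prop :=
  blk y = blk x + 1 ∧
    ((∃ s, x = v (blk x, s) ∧ y = v (blk y, s + τ (blk x))) ∨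
      (x = v (blk x, c) ∧ y ∉ Set.range v) ∨
      (x ∉ Set.range v ∧ y = v (blk y, c + 1)))

variable {blk : W → Fin t} {v : Fin t × ZMod 2 → W}

theorem twistArc_twistShift (hblk : ∀ p, blk (v p) = p.1) (τ : Fin t → ZMod 2) (c : ZMod 2)
    (p : Fin t × ZMod 2) : twistArc blk v τ c (v p) (v (twistShift τ p)) := by
  refine ⟨?_, .inl ⟨p.2, ?_, ?_⟩⟩ <;> simp [twistShift_apply, hblk]

theorem twistArc_of_notMem_range (hblk : ∀ p, blk (v p) = p.1) (τ : Fin t → ZMod 2)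
    (c : ZMod 2) {x : W} (hx : x ∉ Set.range v) :
    twistArc blk v τ c (v (blk x - 1, c)) x ∧ twistArc blk v τ c x (v (blk x + 1, c + 1)) := by
  refine ⟨⟨?_, .inr (.inl ⟨?_, hx⟩)⟩, ⟨?_, .inr (.inr ⟨hx, ?_⟩)⟩⟩ <;> simp [hblk]

theorem not_twistArc_and_twistArc (hv : Injective v) {τ τ' : Fin t → ZMod 2}
    (hτ : ∀ j, τ j ≠ τ' j) {c c' : ZMod 2} (hc : c ≠ c') (x y : W) :
    ¬ (twistArc blk v τ c x y ∧ twistArc blk v τ' c' x y) := by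
  rintro ⟨⟨-, h⟩, ⟨-, h'⟩⟩
  generalize blk x = j at h h'
  generalize blk y = k at h h'
  rcases h with ⟨s, rfl, rfl⟩ | ⟨rfl, hy⟩ | ⟨hx, rfl⟩ <;>
    rcases h' with ⟨s', hx', hy'⟩ | ⟨hx', hy'⟩ | ⟨hx', hy'⟩ <;>
    simp_all [hv.eq_iff]

theorem isStrong_of_twistArc_le (hblk : ∀ p, blk (v p) = p.1) {τ : Fin t → ZMod 2}
    {c : ZMod 2} {R : W → W → Prop} (hle : ∀ x y, twistArc blk v τ c x y → R x y) {a : Fin t}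
    (h01 : ReflTransGen R (v (a, 0)) (v (a, 1))) (h10 : ReflTransGen R (v (a, 1)) (v (a, 0))) :
    IsStrong R :=
  isStrong_of_reflTransGen_range v
    (reflTransGen_of_twistShift (fun p => hle _ _ (twistArc_twistShift hblk τ c p)) h01 h10)
    fun _ hx => ⟨⟨_, hle _ _ (twistArc_of_notMem_range hblk τ c hx).1⟩,
      ⟨_, hle _ _ (twistArc_of_notMem_range hblk τ c hx).2⟩⟩

end TwistArc

theorem goodDecomp_of_ladder {t : ℕ} [NeZero t] (hto : Odd t) {W : Type*} {Q : W → W → Prop}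
    {blk : W → Fin t} {v : Fin t × ZMod 2 → W} (hv : Injective v) (hblk : ∀ p, blk (v p) = p.1)
    (hQ : ∀ x y, blk y = blk x + 1 → Q x y) {a b : Fin t} (hab : a ≠ b)
    (ha : Q (v (a, 0)) (v (a, 1))) (hb : Q (v (b, 0)) (v (b, 1))) : GoodDecomp Q := by
  have : Nontrivial (Fin t) := ⟨⟨a, b, hab⟩⟩
  have h11 : (1 : ZMod 2) + 1 = 0 := rfl
  set τ : Fin t → ZMod 2 := Pi.single a 1 + Pi.single b 1
  set A₂ : W → W → Prop := fun x y => twistArc blk v τ 0 x y ∨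
    (x = v (a, 0) ∧ y = v (a, 1)) ∨ (x = v (b, 0) ∧ y = v (b, 1))
  have hshift : ∀ (τ' : Fin t → ZMod 2) c p,
      twistArc blk v τ' c (v p) (v (twistShift τ' p)) := twistArc_twistShift hblk
  refine ⟨twistArc blk v (τ + 1) 1, A₂, fun x y h => hQ x y h.1, ?_, ?_, ?_, ?_⟩
  · rintro x y (h | ⟨rfl, rfl⟩ | ⟨rfl, rfl⟩)
    exacts [hQ x y h.1, ha, hb]
  · rintro x y ⟨h₁, h | ⟨rfl, rfl⟩ | ⟨rfl, rfl⟩⟩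
    · exact not_twistArc_and_twistArc hv (fun j => by simp) (by decide) x y ⟨h₁, h⟩
    all_goals simpa [hblk] using h₁.1
  · have hsum : ∑ i, (τ + 1) i = 1 := by
      simp [τ, Finset.sum_add_distrib, h11, ZMod.natCast_eq_one_iff_odd.mpr hto]
    exact isStrong_of_twistArc_le hblk (fun _ _ => id)
      ((sameCycle_twistShift_add_one hsum a 0).reflTransGen (hshift _ 1))
      (h11 ▸ (sameCycle_twistShift_add_one hsum a 1).reflTransGen (hshift _ 1))
  · have hstep : ∀ p, A₂ (v p) (v (twistShift τ p)) := fun p => .inl (hshift τ 0 p)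
    have hcycle := sameCycle_twistShift_single_add_single hab
    have hreach_ab : ReflTransGen A₂ (v (a, 1)) (v (b, 0)) :=
      h11 ▸ (hcycle 1).reflTransGen hstep
    have hreach_ba : ReflTransGen A₂ (v (b, 1)) (v (a, 0)) := by
      simpa using (hcycle 0).symm.reflTransGen hstep
    exact isStrong_of_twistArc_le hblk (fun _ _ => .inl) (.single (.inr (.inl ⟨rfl, rfl⟩)))
      (hreach_ab.trans (.head (.inr (.inr ⟨rfl, rfl⟩)) hreach_ba))

theorem exists_injective_zmod_two {α : Type*} [Fintype α] {r : α → α → Prop}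
    (hr : ∀ x, ¬ r x x) (hcard : 2 ≤ Fintype.card α) :
    ∃ w : ZMod 2 → α, Injective w ∧ ((∃ x y, r x y) → r (w 0) (w 1)) := by
  obtain ⟨x, y, hxy, hr'⟩ : ∃ x y, x ≠ y ∧ ((∃ x y, r x y) → r x y) := by
    by_cases h : ∃ x y, r x y
    · obtain ⟨x, y, h⟩ := h
      exact ⟨x, y, fun hxy => hr y (hxy ▸ h), fun _ => h⟩
    · obtain ⟨x, y, hxy⟩ := Fintype.one_lt_card_iff.mp hcard
      exact ⟨x, y, hxy, fun h' => absurd h' h⟩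
  refine ⟨fun s => if s = 0 then x else y, ?_, by simpa using hr'⟩
  intro s s' h
  by_contra hne
  have h10 : (1 : ZMod 2) ≠ 0 := by decide
  obtain ⟨rfl, rfl⟩ | ⟨rfl, rfl⟩ : (s = 0 ∧ s' = 1) ∨ (s = 1 ∧ s' = 0) := by
    clear h; revert s s'; decide
  all_goals simp [h10, hxy, Ne.symm hxy] at h

theorem finSucc_eq_add_one {n : ℕ} [NeZero n] (x : Fin n) : finSucc x = x + 1 := by
  ext
  simp [finSucc, Fin.val_add]

theorem stmt_4_general {t : ℕ} (hto : Odd t) {Vt : Fin t → Type*}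
    [∀ i, Fintype (Vt i)]
    (T : Fin t → Fin t → Prop) (hTham : HasHamCycle T)
    (H : ∀ i, Vt i → Vt i → Prop) (hH : ∀ i, Irreflexive (H i))
    (hcard : ∀ i, 2 ≤ Fintype.card (Vt i))
    (harcs : ∃ i j : Fin t, i ≠ j ∧ (∃ x y, H i x y) ∧ (∃ x y, H j x y)) :
    GoodDecomp (CompArc T H) := by
  have : NeZero t := ⟨hto.pos.ne'⟩
  obtain ⟨e, he⟩ := hTham
  obtain ⟨i₀, j₀, hij, hi₀, hj₀⟩ := harcs
  choose w hw hwH using fun i => exists_injective_zmod_two (hH i) (hcard i)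
  have hbridge : ∀ i, (∃ x y, H i x y) →
      CompArc T H ⟨e (e.symm i), w (e (e.symm i)) 0⟩ ⟨e (e.symm i), w (e (e.symm i)) 1⟩ :=
    fun i h => .inr ⟨rfl, by rw [e.apply_symm_apply]; exact hwH i h⟩
  refine goodDecomp_of_ladder hto (blk := fun x => e.symm x.1)
    (v := fun p => ⟨e p.1, w (e p.1) p.2⟩) ?_ (fun p => e.symm_apply_apply p.1) ?_
    (e.symm.injective.ne hij) (hbridge i₀ hi₀) (hbridge j₀ hj₀)
  · rintro ⟨j, s⟩ ⟨j', s'⟩ h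
    obtain ⟨hj, hs⟩ := Sigma.mk.inj_iff.mp h
    obtain rfl := e.injective hj
    exact Prod.ext rfl (hw _ (eq_of_heq hs))
  · intro x y h
    have := he (e.symm x.1)
    rw [finSucc_eq_add_one, ← h, e.apply_symm_apply, e.apply_symm_apply] at this
    exact .inl this

theorem stmt_4 {t : ℕ} (ht : 3 ≤ t) (hto : Odd t) {Vt : Fin t → Type*}
    [∀ i, Fintype (Vt i)]
    (T : Fin t → Fin t → Prop) (hT : Irreflexive T) (hTham : HasHamCycle T)
    (H : ∀ i, Vt i → Vt i → Prop) (hH : ∀ i, Irreflexive (H i))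
    (hcard : ∀ i, 2 ≤ Fintype.card (Vt i))
    (harcs : ∃ i j : Fin t, i ≠ j ∧ (∃ x y, H i x y) ∧ (∃ x y, H j x y)) :
    GoodDecomp (CompArc T H) :=
  stmt_4_general hto T hTham H hH hcard harcs
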